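/- arXiv:1105.4179 — 2 statements merged into one kernel-verified Lean document; each statement's English description precedes it below -/
import Mathlib

section
/- Let f : ℝ → ℝ be continuously differentiable with compact support and let x ∈ ℝ. Using the principal branch of the complex logarithm (so that log(t) = ln|t| + iπ for real t < 0), one has (1/π) ∫_ℝ log((x − y : ℂ)) · f'(y) dy = (1/π) · lim_{ε→0⁺} ∫_{|x − y| ≥ ε} f(y)/(x − y) dy − i·f(x). Equivalently, the Hilbert transform of the second form equals the negative of the classical Hilbert transform plus a purely imaginary multiple of f arising from the argument of the logarithm on the half-line y > x. -/
/-!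
For `y ≠ x` the principal logarithm is `log (x - y) = ln |x - y| + iπ·[y > x]`, and
`∫_{y > x} f' = -f x` produces the imaginary term. For the real part, integrating by parts on
the two half-lines away from `x` gives
`∫_{|x-y| ≥ ε} f y / (x - y) = ∫_{|x-y| ≥ ε} ln |x - y| f' y + ln ε (f (x + ε) - f (x - ε))`.
As `ε → 0⁺` the first term tends to `∫ ln |x - y| f' y` by dominated convergence (`ln` is locally
integrable), and the boundary term is `O(ε ln ε)` because `f` is Lipschitz.

Note that `Real.log t = ln |t|`, so `log (x - y)` below is `ln |x - y|` on both sides of `x`.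
-/

open MeasureTheory Filter Topology Real Set

lemma locallyIntegrable_of_forall_intervalIntegrable {E : Type*} [NormedAddCommGroup E]
    {f : ℝ → E} (hf : ∀ a b, IntervalIntegrable f volume a b) : LocallyIntegrable f volume :=
  locallyIntegrable_iff.2 fun _K hK =>
    ((intervalIntegrable_iff' enorm_ne_top).1 (hf _ _)).mono_set
      (hK.isBounded.subset_Icc_sInf_sSup.trans Icc_subset_uIcc)

lemma locallyIntegrable_log_sub (x : ℝ) : LocallyIntegrable (fun y => log (x - y)) volume :=
  locallyIntegrable_of_forall_intervalIntegrable fun a b => by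
    simpa using (intervalIntegral.intervalIntegrable_log' (a := x - a) (b := x - b)).comp_sub_left x

lemma integrable_log_sub_mul {d : ℝ → ℝ} (hd : Continuous d) (hdc : HasCompactSupport d)
    (x : ℝ) : Integrable (fun y => log (x - y) * d y) := by
  simpa using (locallyIntegrable_log_sub x).integrable_smul_right_of_hasCompactSupport hd hdc

lemma integrableOn_div_sub {f : ℝ → ℝ} (hf : Integrable f) {s : Set ℝ}
    (hs : MeasurableSet s) {x ε : ℝ} (hε : 0 < ε) (hsx : ∀ y ∈ s, ε ≤ |x - y|) :
    IntegrableOn (fun y => f y / (x - y)) s := by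
  simp only [div_eq_inv_mul]
  refine hf.integrableOn.bdd_mul (c := ε⁻¹) (by fun_prop) (ae_restrict_of_forall_mem hs ?_)
  intro y hy
  rw [norm_inv, Real.norm_eq_abs]
  exact inv_anti₀ hε (hsx y hy)

lemma hasDerivAt_log_sub {x y : ℝ} (hxy : y ≠ x) :
    HasDerivAt (fun y => log (x - y)) (-(x - y)⁻¹) y := by
  simpa [neg_div, one_div] using ((hasDerivAt_id y).const_sub x).log (sub_ne_zero.2 hxy.symm)

lemma setOf_le_abs_sub_eq_union {x ε : ℝ} :
    {y : ℝ | ε ≤ |x - y|} = Iic (x - ε) ∪ Ici (x + ε) := by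
  ext y
  simp only [mem_ofPred_eq, mem_union, mem_Iic, mem_Ici, le_abs]
  constructor <;> rintro (h | h) <;> [left; right; left; right] <;> linarith

lemma measurableSet_le_abs_sub (x ε : ℝ) : MeasurableSet {y : ℝ | ε ≤ |x - y|} :=
  measurableSet_le measurable_const (by fun_prop)

lemma setIntegral_le_abs_sub_eq_add {E : Type*} [NormedAddCommGroup E] [NormedSpace ℝ E]
    {φ : ℝ → E} {x ε : ℝ} (hε : 0 < ε) (hφ : IntegrableOn φ {y | ε ≤ |x - y|}) :
    ∫ y in {y | ε ≤ |x - y|}, φ y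
      = (∫ y in Iic (x - ε), φ y) + ∫ y in Ioi (x + ε), φ y := by
  rw [setOf_le_abs_sub_eq_union] at hφ ⊢
  rw [setIntegral_union (Iic_disjoint_Ici.2 (by linarith)) measurableSet_Ici
    (hφ.mono_set subset_union_left) (hφ.mono_set subset_union_right),
    integral_Ici_eq_integral_Ioi]

lemma integral_Ioi_div_sub_eq {f : ℝ → ℝ} (hf : ContDiff ℝ 1 f) (hfc : HasCompactSupport f)
    {x c : ℝ} (hxc : x < c) :
    ∫ y in Ioi c, f y / (x - y)
      = (∫ y in Ioi c, log (x - y) * deriv f y) + log (x - c) * f c := by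
  have hbdry : Tendsto (fun y => log (x - y) * f y) (𝓝[>] c) (𝓝 (log (x - c) * f c)) :=
    ((ContinuousAt.log (by fun_prop) (sub_ne_zero.2 hxc.ne)).mul
      hf.continuous.continuousAt).tendsto.mono_left nhdsWithin_le_nhds
  have hdiv := integrableOn_div_sub (hf.continuous.integrable_of_hasCompactSupport hfc)
    (measurableSet_Ioi (a := c)) (x := x) (sub_pos.2 hxc) fun y hy =>
      le_abs.2 (.inr (by linarith [mem_Ioi.1 hy]))
  have hibp : ∫ y in Ioi c, log (x - y) * deriv f y
      = 0 - log (x - c) * f c - ∫ y in Ioi c, -(x - y)⁻¹ * f y :=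
    integral_Ioi_mul_deriv_eq_deriv_mul
    (fun y hy => hasDerivAt_log_sub (hxc.trans hy).ne')
    (fun y _ => (hf.differentiable one_ne_zero y).hasDerivAt)
    (integrable_log_sub_mul (hf.continuous_deriv le_rfl) hfc.deriv x).integrableOn
    (hdiv.neg.congr_fun (fun y _ => by simp [div_eq_inv_mul]) measurableSet_Ioi) hbdry
    (hfc.mul_left.is_zero_at_infty.mono_left atTop_le_cocompact)
  have hneg : ∫ y in Ioi c, -(x - y)⁻¹ * f y = -∫ y in Ioi c, f y / (x - y) := by
    simp only [neg_mul, integral_neg, ← div_eq_inv_mul]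
  linarith

lemma integral_Iic_div_sub_eq {f : ℝ → ℝ} (hf : ContDiff ℝ 1 f) (hfc : HasCompactSupport f)
    {x c : ℝ} (hcx : c < x) :
    ∫ y in Iic c, f y / (x - y)
      = (∫ y in Iic c, log (x - y) * deriv f y) - log (x - c) * f c := by
  have hbdry : Tendsto (fun y => log (x - y) * f y) (𝓝[<] c) (𝓝 (log (x - c) * f c)) :=
    ((ContinuousAt.log (by fun_prop) (sub_ne_zero.2 hcx.ne')).mul
      hf.continuous.continuousAt).tendsto.mono_left nhdsWithin_le_nhds
  have hdiv := integrableOn_div_sub (hf.continuous.integrable_of_hasCompactSupport hfc)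
    (measurableSet_Iic (a := c)) (x := x) (sub_pos.2 hcx) fun y hy =>
      le_abs.2 (.inl (by linarith [mem_Iic.1 hy]))
  have hibp : ∫ y in Iic c, log (x - y) * deriv f y
      = log (x - c) * f c - 0 - ∫ y in Iic c, -(x - y)⁻¹ * f y :=
    integral_Iic_mul_deriv_eq_deriv_mul
    (fun y hy => hasDerivAt_log_sub (lt_of_lt_of_le (mem_Iio.1 hy) hcx.le).ne)
    (fun y _ => (hf.differentiable one_ne_zero y).hasDerivAt)
    (integrable_log_sub_mul (hf.continuous_deriv le_rfl) hfc.deriv x).integrableOn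
    (hdiv.neg.congr_fun (fun y _ => by simp [div_eq_inv_mul]) measurableSet_Iic) hbdry
    (hfc.mul_left.is_zero_at_infty.mono_left atBot_le_cocompact)
  have hneg : ∫ y in Iic c, -(x - y)⁻¹ * f y = -∫ y in Iic c, f y / (x - y) := by
    simp only [neg_mul, integral_neg, ← div_eq_inv_mul]
  linarith

lemma setIntegral_div_sub_eq {f : ℝ → ℝ} (hf : ContDiff ℝ 1 f) (hfc : HasCompactSupport f)
    (x : ℝ) {ε : ℝ} (hε : 0 < ε) :
    ∫ y in {y | ε ≤ |x - y|}, f y / (x - y)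
      = (∫ y in {y | ε ≤ |x - y|}, log (x - y) * deriv f y)
        + log ε * (f (x + ε) - f (x - ε)) := by
  have hdiv := integrableOn_div_sub (hf.continuous.integrable_of_hasCompactSupport hfc)
    (measurableSet_le_abs_sub x ε) hε fun _ h => h
  have hg := integrable_log_sub_mul (hf.continuous_deriv le_rfl) hfc.deriv x
  rw [setIntegral_le_abs_sub_eq_add hε hdiv, setIntegral_le_abs_sub_eq_add hε hg.integrableOn,
    integral_Iic_div_sub_eq hf hfc (by linarith), integral_Ioi_div_sub_eq hf hfc (by linarith),
    sub_sub_cancel, sub_add_cancel_left, log_neg_eq_log]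
  ring

lemma tendsto_setIntegral_le_abs_sub {E : Type*} [NormedAddCommGroup E] [NormedSpace ℝ E]
    {g : ℝ → E} (hg : Integrable g) (x : ℝ) :
    Tendsto (fun ε => ∫ y in {y | ε ≤ |x - y|}, g y) (𝓝[>] 0) (𝓝 (∫ y, g y)) := by
  simp_rw [← integral_indicator (measurableSet_le_abs_sub x _)]
  refine tendsto_integral_filter_of_dominated_convergence (fun y => ‖g y‖)
    (.of_forall fun ε => hg.aestronglyMeasurable.indicator (measurableSet_le_abs_sub x ε))
    (.of_forall fun _ => .of_forall fun y => norm_indicator_le_norm_self g y) hg.norm ?_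
  filter_upwards [Measure.ae_ne volume x] with y hy
  refine tendsto_const_nhds.congr' ?_
  filter_upwards [Ioo_mem_nhdsGT (abs_pos.2 (sub_ne_zero.2 hy.symm))] with ε hε
  exact (indicator_of_mem (s := {y | ε ≤ |x - y|}) hε.2.le g).symm

lemma tendsto_log_smul_sub_of_lipschitzWith {E : Type*} [SeminormedAddCommGroup E]
    [NormedSpace ℝ E] {f : ℝ → E} {K : NNReal} (hf : LipschitzWith K f) (x : ℝ) :
    Tendsto (fun ε => log ε • (f (x + ε) - f (x - ε))) (𝓝[>] 0) (𝓝 0) := by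
  have hlim : Tendsto (fun ε => 2 * K * |ε * log ε|) (𝓝[>] 0) (𝓝 0) := by
    simpa using ((continuous_mul_log.tendsto 0).mono_left nhdsWithin_le_nhds).abs.const_mul
      (2 * K : ℝ)
  refine squeeze_zero_norm' ?_ hlim
  filter_upwards [self_mem_nhdsWithin] with ε (hε : 0 < ε)
  calc ‖log ε • (f (x + ε) - f (x - ε))‖
      = |log ε| * ‖f (x + ε) - f (x - ε)‖ := norm_smul _ _
    _ ≤ |log ε| * (K * (2 * ε)) := by
      have hlip := hf.norm_sub_le (x + ε) (x - ε)
      rw [show x + ε - (x - ε) = 2 * ε by ring, Real.norm_eq_abs, abs_of_pos (by positivity)]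
        at hlip
      gcongr
    _ = 2 * K * |ε * log ε| := by rw [abs_mul, abs_of_pos hε]; ring

lemma Complex.log_ofReal_eq_add_ite (t : ℝ) :
    Complex.log t = Real.log t + if t < 0 then π * Complex.I else 0 := by
  rw [Complex.log, Complex.norm_real, Real.norm_eq_abs, Real.log_abs]
  split_ifs with h
  · rw [Complex.arg_ofReal_of_neg h]
  · rw [Complex.arg_ofReal_of_nonneg (not_lt.1 h)]
    simp

lemma integral_complex_log_sub_mul {d : ℝ → ℝ} {x : ℝ}
    (hg : Integrable (fun y => log (x - y) * d y)) (hd : Integrable d) :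
    ∫ y : ℝ, Complex.log (x - y) * d y
      = ((∫ y, log (x - y) * d y : ℝ) : ℂ) + π * Complex.I * ((∫ y in Ioi x, d y : ℝ) : ℂ) := by
  have hsplit (y : ℝ) : Complex.log (x - y) * d y
      = ((log (x - y) * d y : ℝ) : ℂ) + (Ioi x).indicator (fun y => π * Complex.I * d y) y := by
    rw [← Complex.ofReal_sub, Complex.log_ofReal_eq_add_ite]
    simp only [indicator_apply, mem_Ioi, sub_neg]
    split_ifs <;> push_cast <;> ring
  simp_rw [hsplit]
  rw [integral_add hg.ofReal ((hd.ofReal.const_mul _).indicator measurableSet_Ioi),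
    integral_indicator measurableSet_Ioi, integral_const_mul, integral_complex_ofReal,
    integral_complex_ofReal]

/-- **Paper's Corollary 2.4 (equivalence of the first and second forms).**
With the principal branch of the complex logarithm,
`(1/π) ∫_ℝ log(x − y) f'(y) dy = (1/π)·pv − i·f(x)`, where `pv` is the principal-value
Hilbert integral `lim_{ε→0⁺} ∫_{|x − y| ≥ ε} f(y)/(x − y) dy`; i.e. the Hilbert transform of
the second form equals the negative of the classical Hilbert transform plus a purely imaginary
multiple of `f`. -/
theorem second_form_eq_neg_hilbert_add_imaginary
    (f : ℝ → ℝ) (hf : ContDiff ℝ 1 f) (hfc : HasCompactSupport f) (x : ℝ) :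
    ∃ pv : ℝ,
      Tendsto (fun ε : ℝ => ∫ y in {y : ℝ | ε ≤ |x - y|}, f y / (x - y))
        (𝓝[>] 0) (𝓝 pv) ∧
      (1 / (Real.pi : ℂ)) * ∫ y : ℝ, Complex.log ((x : ℂ) - (y : ℂ)) * Complex.ofReal (deriv f y)
        = (1 / (Real.pi : ℂ)) * Complex.ofReal pv - Complex.I * Complex.ofReal (f x) := by
  have hg := integrable_log_sub_mul (hf.continuous_deriv le_rfl) hfc.deriv x
  refine ⟨∫ y, log (x - y) * deriv f y, ?_, ?_⟩
  · obtain ⟨K, hK⟩ := ContDiff.lipschitzWith_of_hasCompactSupport hfc hf one_ne_zero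
    have hlim := (tendsto_setIntegral_le_abs_sub hg x).add
      (tendsto_log_smul_sub_of_lipschitzWith hK x)
    rw [add_zero] at hlim
    refine hlim.congr' ?_
    filter_upwards [self_mem_nhdsWithin] with ε hε
    rw [setIntegral_div_sub_eq hf hfc x hε, smul_eq_mul]
  · rw [integral_complex_log_sub_mul hg
      ((hf.continuous_deriv le_rfl).integrable_of_hasCompactSupport hfc.deriv),
      hfc.integral_Ioi_deriv_eq hf x]
    field_simp
    push_cast
    ring
end

section
/- Let f : ℝ → ℝ be continuously differentiable with compact support. Then the logarithmic potential L(x) = ∫_ℝ ln|x − y| · f(y) dy is differentiable at every x ∈ ℝ, and L'(x) = lim_{ε→0⁺} ∫_{|x − y| ≥ ε} f(y)/(x − y) dy, the principal-value Hilbert integral of f at x. -/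
/-!
The kernel `truncLog ε t = log (max |t| ε)` is, unlike `log |t|`, continuous, and off `t = ±ε`
its derivative is `t⁻¹` on `|t| > ε` and `0` on `|t| < ε`. Integrating the derivative of the
compactly supported function `y ↦ truncLog ε (x - y) * f y` over `ℝ` therefore identifies the
truncated Hilbert integral with `∫ truncLog ε (x - y) * f' y dy`, with no boundary term.
As `ε → 0⁺`, `truncLog ε → log |·|` pointwise off `0` with `|truncLog ε| ≤ |log |·||`, so by
dominated convergence the truncated integrals tend to `∫ log |x - y| * f' y dy`, which is the
derivative of the convolution `log |·| ⋆ f`.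
-/

open MeasureTheory Filter Topology Set
open scoped Convolution

theorem integral_eq_zero_of_hasDerivAt_off_countable_of_hasCompactSupport
    {E : Type*} [NormedAddCommGroup E] [NormedSpace ℝ E] [CompleteSpace E]
    {F F' : ℝ → E} {s : Set ℝ} (hs : s.Countable) (hF : Continuous F)
    (hFc : HasCompactSupport F) (hd : ∀ y ∉ s, HasDerivAt F (F' y) y) (hi : Integrable F') :
    ∫ y, F' y = 0 := by
  obtain ⟨R, hR0, hR⟩ := hFc.isCompact.isBounded.subset_ball_lt 0 (0 : ℝ)
  have hIcc : Metric.ball (0 : ℝ) R ⊆ Icc (-R) R := by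
    rw [Real.ball_eq_Ioo, zero_sub, zero_add]
    exact Ioo_subset_Icc_self
  have hF' : ∀ᵐ y, y ∉ Icc (-R) R → F' y = 0 := by
    filter_upwards [hs.ae_notMem volume] with y hys hy
    exact (hd y hys).unique <| (hasDerivAt_const y 0).congr_of_eventuallyEq <|
      notMem_tsupport_iff_eventuallyEq.1 fun h => hy (hIcc (hR h))
  have hFR : ∀ r, |r| = R → F r = 0 := fun r hr =>
    image_eq_zero_of_notMem_tsupport fun h => by simpa [hr] using hR h
  calc ∫ y, F' y = ∫ y in Icc (-R) R, F' y :=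
        (setIntegral_eq_integral_of_ae_compl_eq_zero hF').symm
    _ = ∫ y in -R..R, F' y := by
      rw [intervalIntegral.integral_of_le (by linarith), integral_Icc_eq_integral_Ioc]
    _ = F R - F (-R) := integral_eq_of_hasDerivAt_off_countable_of_le F F' (by linarith) hs
      hF.continuousOn (fun y hy => hd y hy.2) hi.intervalIntegrable
    _ = 0 := by rw [hFR R (abs_of_pos hR0), hFR (-R) (by simp [abs_of_pos hR0]), sub_zero]

lemma locallyIntegrable_log_abs : LocallyIntegrable (fun t : ℝ => Real.log |t|) := by
  simp only [Real.log_abs]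
  refine locallyIntegrable_iff.2 fun K hK => ?_
  obtain ⟨R, hR⟩ := hK.isBounded.subset_closedBall 0
  rw [Real.closedBall_eq_Icc] at hR
  exact ((intervalIntegrable_iff' (μ := volume)).1
    intervalIntegral.intervalIntegrable_log').mono_set (hR.trans Icc_subset_uIcc)

lemma integral_log_abs_sub_mul_eq_convolution (g : ℝ → ℝ) (x : ℝ) :
    ∫ y, Real.log |x - y| * g y
      = ((fun t => Real.log |t|) ⋆[ContinuousLinearMap.mul ℝ ℝ] g) x := by
  rw [convolution_def]
  simpa using (integral_sub_left_eq_self (fun y => Real.log |x - y| * g y) volume x).symm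

lemma integrable_log_abs_sub_mul {g : ℝ → ℝ} (hg : Continuous g) (hgc : HasCompactSupport g)
    (x : ℝ) : Integrable (fun y => Real.log |x - y| * g y) := by
  simpa using (hgc.convolutionExists_right (ContinuousLinearMap.mul ℝ ℝ)
    locallyIntegrable_log_abs hg x).comp_sub_left x

lemma hasDerivAt_integral_log_abs_sub_mul {f : ℝ → ℝ} (hf : ContDiff ℝ 1 f)
    (hfc : HasCompactSupport f) (x : ℝ) :
    HasDerivAt (fun x => ∫ y, Real.log |x - y| * f y)
      (∫ y, Real.log |x - y| * deriv f y) x := by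
  simp only [integral_log_abs_sub_mul_eq_convolution]
  exact hfc.hasDerivAt_convolution_right _ locallyIntegrable_log_abs hf x

noncomputable def truncLog (ε t : ℝ) : ℝ := Real.log (max |t| ε)

lemma truncLog_of_le {ε t : ℝ} (h : ε ≤ |t|) : truncLog ε t = Real.log |t| := by
  rw [truncLog, max_eq_left h]

lemma continuous_truncLog {ε : ℝ} (hε : 0 < ε) : Continuous (truncLog ε) :=
  (continuous_abs.max continuous_const).log fun _ => (hε.trans_le (le_max_right _ _)).ne'

lemma hasDerivAt_truncLog {ε t : ℝ} (hε : 0 < ε) (ht : |t| ≠ ε) :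
    HasDerivAt (truncLog ε) ({t | ε ≤ |t|}.indicator (·⁻¹) t) t := by
  rcases ht.lt_or_gt with ht | ht
  · have hconst : truncLog ε =ᶠ[𝓝 t] fun _ => Real.log ε := by
      filter_upwards [(continuous_abs.isOpen_preimage _ isOpen_Iio).mem_nhds ht] with s hs
      rw [truncLog, max_eq_right (le_of_lt hs)]
    rw [indicator_of_notMem (show t ∉ {t | ε ≤ |t|} from not_le.2 ht)]
    exact (hasDerivAt_const t _).congr_of_eventuallyEq hconst
  · have hlog : truncLog ε =ᶠ[𝓝 t] Real.log := by
      filter_upwards [(continuous_abs.isOpen_preimage _ isOpen_Ioi).mem_nhds ht] with s hs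
      rw [truncLog_of_le (le_of_lt hs), Real.log_abs]
    rw [indicator_of_mem (show t ∈ {t | ε ≤ |t|} from le_of_lt ht)]
    exact (Real.hasDerivAt_log (abs_pos.1 (hε.trans ht))).congr_of_eventuallyEq hlog

lemma abs_truncLog_le_abs_log {ε t : ℝ} (hε : ε ≤ 1) (ht : t ≠ 0) :
    |truncLog ε t| ≤ |Real.log (|t|)| := by
  rcases le_total ε |t| with h | h
  · rw [truncLog_of_le h]
  · rw [truncLog, max_eq_right h, abs_of_nonpos (Real.log_nonpos ((abs_nonneg t).trans h) hε),
      abs_of_nonpos (Real.log_nonpos (abs_nonneg t) (h.trans hε)), neg_le_neg_iff]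
    exact Real.log_le_log (abs_pos.2 ht) h

lemma setIntegral_div_sub_eq_integral_truncLog_mul_deriv {f : ℝ → ℝ} (hf : ContDiff ℝ 1 f)
    (hfc : HasCompactSupport f) {ε : ℝ} (hε : 0 < ε) (x : ℝ) :
    ∫ y in {y | ε ≤ |x - y|}, f y / (x - y) = ∫ y, truncLog ε (x - y) * deriv f y := by
  set S : Set ℝ := {y | ε ≤ |x - y|}
  have hS : MeasurableSet S := measurableSet_le measurable_const (by fun_prop)
  have hK : Integrable (S.indicator fun y => f y / (x - y)) := by
    refine Integrable.mono' (g := fun y => ε⁻¹ * ‖f y‖)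
      ((hf.continuous.integrable_of_hasCompactSupport hfc).norm.const_mul ε⁻¹)
      ((hf.continuous.measurable.div (by fun_prop)).indicator hS).aestronglyMeasurable
      (ae_of_all _ fun y => ?_)
    by_cases hy : y ∈ S
    · rw [indicator_of_mem hy, norm_div, div_eq_inv_mul]
      gcongr
      exact hy
    · rw [indicator_of_notMem hy, norm_zero]
      positivity
  have hP : Integrable fun y => truncLog ε (x - y) * deriv f y :=
    (((continuous_truncLog hε).comp (by fun_prop)).mul (hf.continuous_deriv le_rfl)
      ).integrable_of_hasCompactSupport hfc.deriv.mul_left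
  have hderiv : ∀ y ∉ ({x - ε, x + ε} : Set ℝ), HasDerivAt (fun y => truncLog ε (x - y) * f y)
      (truncLog ε (x - y) * deriv f y - S.indicator (fun y => f y / (x - y)) y) y := by
    intro y hy
    have hxy : |x - y| ≠ ε := by
      rw [Ne, abs_eq hε.le]
      rintro (h | h) <;> exact hy (by rw [mem_insert_iff, mem_singleton_iff]; grind)
    refine (((hasDerivAt_truncLog hε hxy).comp_const_sub x y).fun_mul
      ((hf.differentiable one_ne_zero y).hasDerivAt)).congr_deriv ?_
    simp only [S, indicator_apply, mem_ofPred_eq]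
    split_ifs <;> ring
  have h := integral_eq_zero_of_hasDerivAt_off_countable_of_hasCompactSupport
    ((countable_singleton _).insert _) (((continuous_truncLog hε).comp (by fun_prop)).mul
      hf.continuous) hfc.mul_left hderiv (hP.sub hK)
  rw [integral_sub hP hK, sub_eq_zero] at h
  rw [← integral_indicator hS, h]

lemma tendsto_integral_truncLog_sub_mul {g : ℝ → ℝ} (hg : Continuous g)
    (hgc : HasCompactSupport g) (x : ℝ) :
    Tendsto (fun ε => ∫ y, truncLog ε (x - y) * g y) (𝓝[>] 0)
      (𝓝 (∫ y, Real.log |x - y| * g y)) := by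
  refine tendsto_integral_filter_of_dominated_convergence (fun y => ‖Real.log |x - y| * g y‖)
    ?_ ?_ (integrable_log_abs_sub_mul hg hgc x).norm ?_
  · filter_upwards [self_mem_nhdsWithin] with ε hε
    exact (((continuous_truncLog hε).comp (by fun_prop)).mul hg).aestronglyMeasurable
  · filter_upwards [Ioc_mem_nhdsGT one_pos] with ε hε
    filter_upwards [Measure.ae_ne volume x] with y hy
    rw [norm_mul, norm_mul]
    gcongr
    exact abs_truncLog_le_abs_log hε.2 (sub_ne_zero.2 hy.symm)
  · filter_upwards [Measure.ae_ne volume x] with y hy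
    refine tendsto_const_nhds.congr' ?_
    filter_upwards [Ioo_mem_nhdsGT (abs_pos.2 (sub_ne_zero.2 hy.symm))] with ε hε
    rw [truncLog_of_le hε.2.le]

/-- **Derivative of the logarithmic potential is the PV Hilbert integral (eq. (7), first part).**
For `f` continuously differentiable with compact support, the logarithmic potential
`L(x) = ∫_ℝ ln|x − y| f(y) dy` is differentiable at every `x`, with derivative equal to the
principal-value Hilbert integral `lim_{ε→0⁺} ∫_{|x − y| ≥ ε} f(y)/(x − y) dy`. -/
theorem logPotential_hasDerivAt_pv_hilbert
    (f : ℝ → ℝ) (hf : ContDiff ℝ 1 f) (hfc : HasCompactSupport f) :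
    ∀ x : ℝ, ∃ pv : ℝ,
      Tendsto (fun ε : ℝ => ∫ y in {y : ℝ | ε ≤ |x - y|}, f y / (x - y))
        (𝓝[>] 0) (𝓝 pv) ∧
      HasDerivAt (fun x : ℝ => ∫ y : ℝ, Real.log |x - y| * f y) pv x := by
  intro x
  refine ⟨_, ?_, hasDerivAt_integral_log_abs_sub_mul hf hfc x⟩
  refine (tendsto_integral_truncLog_sub_mul (hf.continuous_deriv le_rfl) hfc.deriv x).congr' ?_
  filter_upwards [self_mem_nhdsWithin] with ε hε
  exact (setIntegral_div_sub_eq_integral_truncLog_mul_deriv hf hfc hε x).symm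
end
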